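/- arXiv:1104.2706 — 3 statements merged into one kernel-verified Lean document; each statement's English description precedes it below -/
import Mathlib

section
/- Let n = kt + r with k ≥ 2, 0 ≤ r < t. Then the maximum size ρ_q(n,t) of a subspace partition of V(n,q) whose smallest member has dimension exactly t equals q^{t+r}·Σ_{i=0}^{k-2} q^{it} + 1. -/
open Module

/-- A subspace partition: a collection of nonzero subspaces such that every
nonzero vector lies in exactly one member. -/
def IsSubspacePartition {F V : Type*} [Field F] [AddCommGroup V] [Module F V]
    (P : Finset (Submodule F V)) : Prop :=
  (∀ W ∈ P, W ≠ ⊥) ∧ ∀ v : V, v ≠ 0 → ∃! W, W ∈ P ∧ v ∈ W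

/-!
Counting nonzero vectors, a subspace partition `P` of `V(n, q)` satisfies
`∑ W ∈ P, (q ^ dim W - 1) = q ^ n - 1`. When every member has dimension at least `t`, its size
`s` therefore satisfies `s ≡ 1 (mod q ^ t)` and `s (q ^ t - 1) ≤ q ^ n - 1`; since `r < t` gives
`q ^ (t + r) < q ^ (2 t)`, these force `s ≤ q ^ (t + r) ∑_{i < k - 1} q ^ (i t) + 1`.

The bound is attained recursively. For `t ≤ m`, let `B` be the field with `q ^ m` elements and
`σ : F ^ t ↪ B` an `F`-linear embedding. Then `F ^ t × B ≅ V(t + m, q)` is partitioned by the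
`q ^ m` graphs of the maps `a ↦ b σ(a)`, `b ∈ B`, each of dimension `t`, together with the
subspaces `0 × W` for the members `W` of any subspace partition of `B`.
-/

open Finset

theorem pow_add_mul_geom_sum_mul_sub_one {R : Type*} [CommRing R] (q : R) (k t r : ℕ) :
    q ^ (t + r) * (∑ i ∈ range k, q ^ (i * t)) * (q ^ t - 1) + q ^ (t + r) =
      q ^ ((k + 1) * t + r) := by
  simp_rw [mul_comm _ t, pow_mul]
  rw [mul_assoc, geom_sum_mul]
  ring

theorem Int.nonpos_of_dvd_of_lt {a x : ℤ} (hdvd : x ∣ a) (hlt : a < x) : a ≤ 0 := by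
  by_contra! ha
  exact (Int.le_of_dvd ha hdvd).not_gt hlt

theorem card_le_of_sum_pow_sub_one_eq {ι : Type*} {q k t r : ℕ} (hq : 2 ≤ q) (hk : 2 ≤ k)
    (hr : r < t) {s : Finset ι} {d : ι → ℕ} (hd : ∀ i ∈ s, t ≤ d i)
    (hsum : ∑ i ∈ s, (q ^ d i - 1) = q ^ (k * t + r) - 1) :
    #s ≤ q ^ (t + r) * ∑ i ∈ range (k - 1), q ^ (i * t) + 1 := by
  obtain ⟨k, rfl⟩ : ∃ k', k = k' + 1 := ⟨k - 1, by omega⟩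
  rw [Nat.add_sub_cancel]
  set T := q ^ (t + r) * ∑ i ∈ range k, q ^ (i * t)
  have hqpos : 0 < q := by omega
  zify [Nat.one_le_pow _ _ hqpos] at hsum ⊢
  set x : ℤ := (q : ℤ) ^ t
  have hT : (T : ℤ) * (x - 1) + (q : ℤ) ^ (t + r) = (q : ℤ) ^ ((k + 1) * t + r) := by
    simpa [T] using pow_add_mul_geom_sum_mul_sub_one (q : ℤ) k t r
  have hx_dvd_T : x ∣ T := by
    simp only [T]; push_cast
    exact (pow_dvd_pow _ (Nat.le_add_right t r)).mul_right _
  have hx_dvd_s : x ∣ #s - 1 := by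
    have : (#s : ℤ) - 1 = ∑ i ∈ s, (q : ℤ) ^ d i - (q : ℤ) ^ ((k + 1) * t + r) := by
      rw [sum_sub_distrib, sum_const, nsmul_one] at hsum
      linarith
    rw [this]
    refine dvd_sub (dvd_sum fun i hi => pow_dvd_pow _ (hd i hi)) (pow_dvd_pow _ ?_)
    nlinarith
  have hlower : (#s : ℤ) * (x - 1) ≤ (q : ℤ) ^ ((k + 1) * t + r) - 1 := by
    rw [← hsum, ← nsmul_eq_mul, ← sum_const]
    exact sum_le_sum fun i hi =>
      sub_le_sub_right (pow_le_pow_right₀ (by exact_mod_cast hqpos) (hd i hi)) 1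
  have hsmall : (q : ℤ) ^ (t + r) < x * x := by
    rw [← pow_add]; gcongr; omega
  have hx : 1 < x := one_lt_pow₀ (by exact_mod_cast hq) (by omega)
  -- `(#s - 1 - T) (x - 1) ≤ q ^ (t + r) - x < x (x - 1)`
  have hlt : (#s : ℤ) - 1 - T < x := by nlinarith
  linarith [Int.nonpos_of_dvd_of_lt (dvd_sub hx_dvd_s hx_dvd_T) hlt]

namespace IsSubspacePartition

variable {F V V' : Type*} [Field F] [AddCommGroup V] [Module F V] [AddCommGroup V']
  [Module F V'] {P : Finset (Submodule F V)}

theorem singleton_top [Nontrivial V] : IsSubspacePartition ({⊤} : Finset (Submodule F V)) :=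
  ⟨by simp, fun v _ => ⟨⊤, by simp, by simp⟩⟩

theorem map_equiv (hP : IsSubspacePartition P) (e : V ≃ₗ[F] V') :
    IsSubspacePartition (P.map (Submodule.orderIsoMapComap e).toEmbedding) := by
  set f := Submodule.orderIsoMapComap e
  refine ⟨forall_mem_map.2 fun W hW => f.map_bot ▸ f.injective.ne (hP.1 W hW), fun v hv => ?_⟩
  obtain ⟨W, ⟨hW, hvW⟩, huniq⟩ := hP.2 (e.symm v) (by simpa using hv)
  refine ⟨f W, ⟨mem_map_of_mem _ hW, (Submodule.mem_map_equiv _).2 hvW⟩, ?_⟩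
  rintro _ ⟨hY, hvY⟩
  obtain ⟨Y, hYP, rfl⟩ := mem_map.1 hY
  exact congrArg f (huniq Y ⟨hYP, (Submodule.mem_map_equiv _).1 hvY⟩)

open Classical in
theorem sum_natCard_sub_one [Finite V] (hP : IsSubspacePartition P) :
    ∑ W ∈ P, (Nat.card W - 1) = Nat.card V - 1 := by
  have : Fintype V := Fintype.ofFinite V
  have hdisj :
      (P : Set (Submodule F V)).PairwiseDisjoint fun W => (W : Set V).toFinset.erase 0 := by
    intro W hW W' hW' hne
    simp only [Function.onFun, disjoint_left, mem_erase, Set.mem_toFinset, SetLike.mem_coe]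
    rintro v ⟨hv0, hvW⟩ ⟨-, hvW'⟩
    exact hne ((hP.2 v hv0).unique ⟨hW, hvW⟩ ⟨hW', hvW'⟩)
  have hunion : P.biUnion (fun W => (W : Set V).toFinset.erase 0) = univ.erase 0 := by
    ext v
    simp only [mem_biUnion, mem_erase, Set.mem_toFinset, SetLike.mem_coe, mem_univ, and_true]
    exact ⟨fun ⟨_, _, hv0, _⟩ => hv0, fun hv0 =>
      let ⟨W, ⟨hW, hvW⟩, _⟩ := hP.2 v hv0; ⟨W, hW, hv0, hvW⟩⟩
  calc ∑ W ∈ P, (Nat.card W - 1) = ∑ W ∈ P, #((W : Set V).toFinset.erase 0) := by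
        refine sum_congr rfl fun W _ => ?_
        rw [card_erase_of_mem (by simp), ← Nat.card_eq_card_toFinset]; rfl
    _ = Nat.card V - 1 := by
        rw [← card_biUnion hdisj, hunion, card_erase_of_mem (mem_univ _), card_univ,
          Nat.card_eq_fintype_card]

theorem sum_pow_finrank_sub_one [Finite F] [Module.Finite F V] (hP : IsSubspacePartition P) :
    ∑ W ∈ P, (Nat.card F ^ finrank F W - 1) = Nat.card F ^ finrank F V - 1 := by
  have : Finite V := Module.finite_of_finite F
  simp_rw [← Module.natCard_eq_pow_finrank]
  exact hP.sum_natCard_sub_one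

theorem card_le [Finite F] [Module.Finite F V] (hP : IsSubspacePartition P) {k t r : ℕ}
    (hk : 2 ≤ k) (hr : r < t) (hV : finrank F V = k * t + r) (hPt : ∀ W ∈ P, t ≤ finrank F W) :
    #P ≤ Nat.card F ^ (t + r) * ∑ i ∈ range (k - 1), Nat.card F ^ (i * t) + 1 :=
  card_le_of_sum_pow_sub_one_eq Finite.one_lt_card hk hr hPt (hV ▸ hP.sum_pow_finrank_sub_one)

end IsSubspacePartition

theorem Submodule.finrank_orderIsoMapComap {F V V' : Type*} [Field F] [AddCommGroup V]
    [Module F V] [AddCommGroup V'] [Module F V'] (e : V ≃ₗ[F] V') (W : Submodule F V) :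
    finrank F (orderIsoMapComap e W) = finrank F W :=
  e.finrank_map_eq W

section Graphs

variable {F U B ι : Type*} [Field F] [AddCommGroup U] [Module F U] [AddCommGroup B] [Module F B]

theorem LinearMap.finrank_graph (f : U →ₗ[F] B) : finrank F f.graph = finrank F U := by
  rw [graph_eq_range_prod, finrank_range_of_inj fun _ _ h => congrArg Prod.fst h]

theorem Submodule.finrank_bot_prod (W : Submodule F B) :
    finrank F ((⊥ : Submodule F U).prod W) = finrank F W := by
  rw [← map_inr]
  exact (equivMapOfInjective _ LinearMap.inr_injective W).finrank_eq.symm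

variable [Fintype ι] {φ : ι → U →ₗ[F] B} {P : Finset (Submodule F B)}

open Classical in
noncomputable def extendByGraphs (φ : ι → U →ₗ[F] B) (P : Finset (Submodule F B)) :
    Finset (Submodule F (U × B)) :=
  univ.image (fun i => (φ i).graph) ∪ P.image (Submodule.prod ⊥)

theorem mem_extendByGraphs {Y : Submodule F (U × B)} :
    Y ∈ extendByGraphs φ P ↔
      (∃ i, (φ i).graph = Y) ∨ ∃ W ∈ P, (⊥ : Submodule F U).prod W = Y := by
  simp [extendByGraphs]

theorem isSubspacePartition_extendByGraphs [Nontrivial U]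
    (hφ : ∀ a ≠ 0, Function.Bijective fun i => φ i a) (hP : IsSubspacePartition P) :
    IsSubspacePartition (extendByGraphs φ P) := by
  refine ⟨fun Y hY => ?_, fun ⟨a, c⟩ hv => ?_⟩
  · rw [Submodule.ne_bot_iff]
    obtain ⟨i, rfl⟩ | ⟨W, hW, rfl⟩ := mem_extendByGraphs.1 hY
    · obtain ⟨a, ha⟩ := exists_ne (0 : U)
      exact ⟨(a, φ i a), rfl, by simp [ha]⟩
    · obtain ⟨w, hw, hw0⟩ := Submodule.exists_mem_ne_zero_of_ne_bot (hP.1 W hW)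
      exact ⟨(0, w), ⟨Submodule.zero_mem _, hw⟩, by simp [hw0]⟩
  by_cases ha : a = 0
  · subst ha
    have hc : c ≠ 0 := by simpa using hv
    obtain ⟨W, ⟨hW, hcW⟩, huniq⟩ := hP.2 c hc
    refine ⟨(⊥ : Submodule F U).prod W, ⟨mem_extendByGraphs.2 (.inr ⟨W, hW, rfl⟩), by simpa⟩, ?_⟩
    rintro Y ⟨hY, hcY⟩
    obtain ⟨i, rfl⟩ | ⟨W', hW', rfl⟩ := mem_extendByGraphs.1 hY
    · exact absurd (by simpa using hcY) hc
    · rw [huniq W' ⟨hW', (Submodule.mem_prod.1 hcY).2⟩]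
  · obtain ⟨i, hi⟩ := (hφ a ha).2 c
    refine ⟨(φ i).graph, ⟨mem_extendByGraphs.2 (.inl ⟨i, rfl⟩), hi.symm⟩, ?_⟩
    rintro Y ⟨hY, hcY⟩
    obtain ⟨j, rfl⟩ | ⟨W', hW', rfl⟩ := mem_extendByGraphs.1 hY
    · rw [(hφ a ha).1 (hi.trans hcY : φ i a = φ j a)]
    · exact absurd (by simpa using (Submodule.mem_prod.1 hcY).1) ha

theorem card_extendByGraphs [Nontrivial U] (hφ : ∀ a ≠ 0, Function.Bijective fun i => φ i a) :
    #(extendByGraphs φ P) = Fintype.card ι + #P := by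
  obtain ⟨a, ha⟩ := exists_ne (0 : U)
  have hgraph : Function.Injective fun i => (φ i).graph := fun i j h => by
    have : (a, φ i a) ∈ (φ j).graph := by simp only at h; rw [← h]; rfl
    exact (hφ a ha).1 this
  have hprod : Function.Injective ((⊥ : Submodule F U).prod (M' := B)) := fun W W' h =>
    Submodule.map_injective_of_injective LinearMap.inr_injective (by simpa [Submodule.map_inr])
  have hdisj : Disjoint (univ.image fun i => (φ i).graph) (P.image (Submodule.prod ⊥)) := by
    simp only [disjoint_left, mem_image, mem_univ, true_and]
    rintro _ ⟨i, rfl⟩ ⟨W, -, hW⟩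
    have : (a, φ i a) ∈ (⊥ : Submodule F U).prod W := by rw [hW]; rfl
    exact ha (Submodule.mem_prod.1 this).1
  rw [extendByGraphs, card_union_of_disjoint hdisj, card_image_of_injective _ hgraph,
    card_image_of_injective _ hprod, card_univ]

end Graphs

theorem IsSubspacePartition.exists_prod_of_field {F B : Type*} [Field F] [Field B] [Algebra F B]
    [Finite B] {t : ℕ} (ht : 0 < t) (htB : t ≤ finrank F B) {P : Finset (Submodule F B)}
    (hP : IsSubspacePartition P) (hPt : ∀ W ∈ P, t ≤ finrank F W) :
    ∃ P' : Finset (Submodule F ((Fin t → F) × B)), IsSubspacePartition P' ∧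
      (∀ W ∈ P', t ≤ finrank F W) ∧ (∃ W ∈ P', finrank F W = t) ∧ #P' = Nat.card B + #P := by
  have : Fintype B := Fintype.ofFinite B
  have : Module.Finite F B := .of_finite
  have : NeZero t := ⟨ht.ne'⟩
  obtain ⟨σ, hσ⟩ := (finrank_le_iff_exists_linearMap (R := F) (M := Fin t → F) (M' := B)).1
    (by rwa [finrank_fin_fun])
  set φ : B → (Fin t → F) →ₗ[F] B := fun b => LinearMap.mulLeft F b ∘ₗ σ
  have hφ : ∀ a ≠ 0, Function.Bijective fun b => φ b a := fun a ha =>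
    mulRight_bijective₀ (σ a) ((map_ne_zero_iff σ hσ).2 ha)
  refine ⟨extendByGraphs φ P, isSubspacePartition_extendByGraphs hφ hP, fun W hW => ?_,
    ⟨(φ 0).graph, mem_extendByGraphs.2 (.inl ⟨0, rfl⟩), by simp [LinearMap.finrank_graph]⟩, ?_⟩
  · obtain ⟨b, rfl⟩ | ⟨W, hWP, rfl⟩ := mem_extendByGraphs.1 hW
    · simp [LinearMap.finrank_graph]
    · simpa [Submodule.finrank_bot_prod] using hPt W hWP
  · rw [card_extendByGraphs hφ, Nat.card_eq_fintype_card]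

theorem IsSubspacePartition.exists_of_finrank_eq_add {F W V : Type*} [Field F] [Finite F]
    [AddCommGroup W] [Module F W] [AddCommGroup V] [Module F V] {t : ℕ} (ht : 0 < t)
    (htW : t ≤ finrank F W) (hV : finrank F V = t + finrank F W) {P : Finset (Submodule F W)}
    (hP : IsSubspacePartition P) (hPt : ∀ X ∈ P, t ≤ finrank F X) :
    ∃ P' : Finset (Submodule F V), IsSubspacePartition P' ∧ (∀ X ∈ P', t ≤ finrank F X) ∧
      (∃ X ∈ P', finrank F X = t) ∧ #P' = Nat.card F ^ finrank F W + #P := by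
  set m := finrank F W
  have : Module.Finite F W := Module.finite_of_finrank_pos (by omega)
  have : Module.Finite F V := Module.finite_of_finrank_pos (by omega)
  have : NeZero m := ⟨by omega⟩
  obtain ⟨p, _⟩ := CharP.exists F
  have : Fact p.Prime := ⟨CharP.char_is_prime F p⟩
  let B := FiniteField.Extension F p m
  have hB : finrank F B = m := FiniteField.finrank_extension F p m
  let e₁ : W ≃ₗ[F] B := .ofFinrankEq _ _ hB.symm
  let e₂ : ((Fin t → F) × B) ≃ₗ[F] V :=
    .ofFinrankEq _ _ (by rw [finrank_prod, finrank_fin_fun, hB, hV])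
  obtain ⟨P₁, hP₁, hP₁t, ⟨X, hX, hXt⟩, hP₁card⟩ := (hP.map_equiv e₁).exists_prod_of_field ht
    (by rwa [hB])
    (forall_mem_map.2 fun X hX => (Submodule.finrank_orderIsoMapComap e₁ X).symm ▸ hPt X hX)
  refine ⟨P₁.map (Submodule.orderIsoMapComap e₂).toEmbedding, hP₁.map_equiv e₂,
    forall_mem_map.2 fun X hX => (Submodule.finrank_orderIsoMapComap e₂ X).symm ▸ hP₁t X hX,
    ⟨_, mem_map_of_mem _ hX, (Submodule.finrank_orderIsoMapComap e₂ X).trans hXt⟩, ?_⟩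
  rw [card_map, hP₁card, card_map, FiniteField.natCard_extension]

theorem exists_isSubspacePartition_card {F : Type*} [Field F] [Finite F] {k t r : ℕ} (hk : 2 ≤ k)
    (hr : r < t) :
    ∃ P : Finset (Submodule F (Fin (k * t + r) → F)), IsSubspacePartition P ∧
      (∀ W ∈ P, t ≤ finrank F W) ∧ (∃ W ∈ P, finrank F W = t) ∧
      #P = Nat.card F ^ (t + r) * ∑ i ∈ range (k - 1), Nat.card F ^ (i * t) + 1 := by
  induction k, hk using Nat.le_induction with
  | base =>
    have : NeZero (t + r) := ⟨by omega⟩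
    obtain ⟨P, hP, hPt, hPmin, hcard⟩ :=
      (IsSubspacePartition.singleton_top (F := F) (V := Fin (t + r) → F)).exists_of_finrank_eq_add
        (V := Fin (2 * t + r) → F) (t := t) (by omega) (by simp)
        (by simp only [finrank_fin_fun]; ring) (by simp)
    exact ⟨P, hP, hPt, hPmin, by simpa using hcard⟩
  | succ k hk ih =>
    obtain ⟨P, hP, hPt, -, hcard⟩ := ih
    obtain ⟨P', hP', hP't, hP'min, hcard'⟩ := hP.exists_of_finrank_eq_add
      (V := Fin ((k + 1) * t + r) → F) (by omega) (by rw [finrank_fin_fun]; nlinarith)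
      (by simp only [finrank_fin_fun]; ring) hPt
    refine ⟨P', hP', hP't, hP'min, ?_⟩
    obtain ⟨k, rfl⟩ : ∃ k', k = k' + 1 := ⟨k - 1, by omega⟩
    simp only [hcard', hcard, finrank_fin_fun, Nat.add_sub_cancel, sum_range_succ]
    ring

/-- ρ_q(n,t) is the greatest element of the set of sizes of subspace partitions of
V(n,q) whose smallest member has dimension t. -/
theorem rho_eq {F : Type*} [Field F] [Fintype F]
    (q n k t r : ℕ) (hq : Fintype.card F = q)
    (hk : 2 ≤ k) (hr : r < t) (hn : n = k * t + r) :
    IsGreatest {m : ℕ | ∃ P : Finset (Submodule F (Fin n → F)),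
        IsSubspacePartition P ∧ (∀ W ∈ P, t ≤ finrank F ↥W) ∧
        (∃ W ∈ P, finrank F ↥W = t) ∧ P.card = m}
      (q ^ (t + r) * ∑ i ∈ Finset.range (k - 1), q ^ (i * t) + 1) := by
  subst hn hq
  rw [← Nat.card_eq_fintype_card]
  refine ⟨exists_isSubspacePartition_card hk hr, ?_⟩
  rintro _ ⟨P, hP, hPt, -, rfl⟩
  exact hP.card_le hk hr (finrank_fin_fun F) hPt
end

section
/- Let d, d', n be integers with 0 < d' < d ≤ n/2, and q a prime power. Then σ_q(n,d) < σ_q(n,d'), i.e., the minimum size of a subspace partition of V(n,q) whose largest member has dimension d is strictly less than that with largest member of dimension d'. Concretely, using that θ_n/θ_t ≤ σ_q(n,t) < θ_n/θ_t + q^{⌈(t+r)/2⌉} with r = n mod t and θ_i = (q^i-1)/(q-1), one has σ_q(n,d) < 2θ_n/θ_d ≤ qθ_n/θ_d < θ_n/θ_{d-1} ≤ σ_q(n,d-1). -/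
open Module

/-- The set of sizes of subspace partitions of V(n,q) whose largest member has
dimension exactly `t`. -/
def partitionSizes (F : Type*) [Field F] [Fintype F] (n t : ℕ) : Set ℕ :=
  {m : ℕ | ∃ P : Finset (Submodule F (Fin n → F)),
    IsSubspacePartition P ∧ (∀ W ∈ P, finrank F ↥W ≤ t) ∧
    (∃ W ∈ P, finrank F ↥W = t) ∧ P.card = m}

/-!
Counting nonzero vectors, a partition of `𝔽_q^n` into subspaces of dimension at most `t` has at
least `(q^n - 1)/(q^t - 1) > q^(n-t)` members. Conversely, since `d ≤ n - d` we may write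
`𝔽_q^n ≅ A × 𝔽_{q^(n-d)}` with `A ≤ 𝔽_{q^(n-d)}` of dimension `d`; the graphs of the maps
`y ↦ γ y` on `A` (`γ ∈ 𝔽_{q^(n-d)}`) meet pairwise in `0` because `𝔽_{q^(n-d)}` is a field, and
together with the lines of `0 × 𝔽_{q^(n-d)}` they partition the space into fewer than
`2 q^(n-d) ≤ q^(n-d+1) ≤ q^(n-d')` members of dimension at most `d`.
-/

namespace IsSubspacePartition

variable {F V V' : Type*} [Field F] [AddCommGroup V] [Module F V] [AddCommGroup V'] [Module F V']

theorem map_linearEquiv {P : Finset (Submodule F V)} (hP : IsSubspacePartition P)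
    (e : V ≃ₗ[F] V') [DecidableEq (Submodule F V')] :
    IsSubspacePartition (P.image (Submodule.map (e : V →ₗ[F] V'))) := by
  refine ⟨?_, fun v hv => ?_⟩
  · simp only [Finset.mem_image, forall_exists_index, and_imp]
    rintro _ W hW rfl
    exact Submodule.map_eq_bot_iff.not.mpr (hP.1 W hW)
  · obtain ⟨W, ⟨hW, hvW⟩, huniq⟩ := hP.2 (e.symm v) (by simpa using hv)
    refine ⟨W.map (e : V →ₗ[F] V'),
      ⟨Finset.mem_image_of_mem _ hW, (Submodule.mem_map_equiv W).mpr hvW⟩, ?_⟩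
    rintro _ ⟨hmem, hvW'⟩
    obtain ⟨W', hW', rfl⟩ := Finset.mem_image.mp hmem
    rw [huniq W' ⟨hW', (Submodule.mem_map_equiv W').mp hvW'⟩]

variable [Fintype F] [Fintype V]

theorem card_sub_one_le_card_mul {P : Finset (Submodule F V)} (hP : IsSubspacePartition P)
    {t : ℕ} (ht : ∀ W ∈ P, finrank F W ≤ t) :
    Fintype.card V - 1 ≤ P.card * (Fintype.card F ^ t - 1) := by
  classical
  let nonzeroIn (W : Submodule F V) : Finset V := (W : Set V).toFinset.erase 0
  have hcover : Finset.univ.erase 0 ⊆ P.biUnion nonzeroIn := by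
    intro v hv
    obtain ⟨W, ⟨hW, hvW⟩, -⟩ := hP.2 v (Finset.ne_of_mem_erase hv)
    exact Finset.mem_biUnion.mpr ⟨W, hW, by simp [nonzeroIn, hvW, Finset.ne_of_mem_erase hv]⟩
  have hcard (W : Submodule F V) (hW : W ∈ P) : (nonzeroIn W).card ≤ Fintype.card F ^ t - 1 := by
    have : Fintype.card W ≤ Fintype.card F ^ t := by
      rw [Module.card_eq_pow_finrank (K := F)]
      exact Nat.pow_le_pow_right Fintype.card_pos (ht W hW)
    rw [Finset.card_erase_of_mem (by simp), Set.toFinset_card]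
    simp only [SetLike.coe_sort_coe]
    omega
  calc Fintype.card V - 1 = (Finset.univ.erase (0 : V)).card := by
        rw [Finset.card_erase_of_mem (Finset.mem_univ _), Finset.card_univ]
    _ ≤ (P.biUnion nonzeroIn).card := Finset.card_le_card hcover
    _ ≤ ∑ W ∈ P, (nonzeroIn W).card := Finset.card_biUnion_le
    _ ≤ ∑ _W ∈ P, (Fintype.card F ^ t - 1) := Finset.sum_le_sum hcard
    _ = P.card * (Fintype.card F ^ t - 1) := by rw [Finset.sum_const, smul_eq_mul]

end IsSubspacePartition

theorem Nat.pow_sub_lt_of_pow_sub_one_le_mul {q n t m : ℕ} (hq : 2 ≤ q) (htn : t < n)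
    (h : q ^ n - 1 ≤ m * (q ^ t - 1)) : q ^ (n - t) < m := by
  by_contra! hm
  have hsplit : q ^ (n - t) * q ^ t = q ^ n := by rw [← pow_add, Nat.sub_add_cancel htn.le]
  have htwo : 2 ≤ q ^ (n - t) := hq.trans (Nat.le_self_pow (by omega) q)
  have hpos : 1 ≤ q ^ t := Nat.one_le_pow _ _ (by omega)
  have hmul := Nat.mul_le_mul_right (q ^ t - 1) hm
  rw [Nat.mul_sub_one, Nat.mul_sub_one, hsplit] at hmul
  rw [Nat.mul_sub_one] at h
  have : q ^ (n - t) ≤ q ^ n := hsplit ▸ Nat.le_mul_of_pos_right _ hpos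
  omega

section partitionSizes

variable {F : Type*} [Field F] [Fintype F]

theorem pow_sub_lt_of_mem_partitionSizes {n t m : ℕ} (hm : m ∈ partitionSizes F n t)
    (htn : t < n) : Fintype.card F ^ (n - t) < m := by
  obtain ⟨P, hP, hle, -, rfl⟩ := hm
  have hcount := hP.card_sub_one_le_card_mul hle
  rw [Module.card_eq_pow_finrank (K := F), finrank_fin_fun] at hcount
  exact Nat.pow_sub_lt_of_pow_sub_one_le_mul Fintype.one_lt_card htn hcount

theorem card_mem_partitionSizes {V : Type*} [AddCommGroup V] [Module F V]
    [FiniteDimensional F V] {n t : ℕ} (hV : finrank F V = n) {P : Finset (Submodule F V)}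
    (hP : IsSubspacePartition P) (hle : ∀ W ∈ P, finrank F W ≤ t)
    (hex : ∃ W ∈ P, finrank F W = t) : P.card ∈ partitionSizes F n t := by
  classical
  obtain ⟨e⟩ : Nonempty (V ≃ₗ[F] (Fin n → F)) :=
    ⟨LinearEquiv.ofFinrankEq _ _ (by rw [hV, finrank_fin_fun])⟩
  have hfinrank (W : Submodule F V) : finrank F (W.map (e : V →ₗ[F] Fin n → F)) = finrank F W :=
    LinearEquiv.finrank_map_eq e W
  refine ⟨P.image (Submodule.map (e : V →ₗ[F] Fin n → F)), hP.map_linearEquiv e, ?_, ?_,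
    Finset.card_image_of_injective _ (Submodule.map_injective_of_injective e.injective)⟩
  · simp only [Finset.mem_image, forall_exists_index, and_imp]
    rintro _ W hW rfl
    exact (hfinrank W).trans_le (hle W hW)
  · obtain ⟨W, hW, hWt⟩ := hex
    exact ⟨_, Finset.mem_image_of_mem _ hW, (hfinrank W).trans hWt⟩

end partitionSizes

theorem Submodule.exists_finrank_eq {F V : Type*} [Field F] [AddCommGroup V] [Module F V]
    [FiniteDimensional F V] {d : ℕ} (hd : d ≤ finrank F V) :
    ∃ A : Submodule F V, finrank F A = d := by
  let b := Module.finBasis F V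
  refine ⟨Submodule.span F (Set.range (b ∘ Fin.castLE hd)), ?_⟩
  rw [finrank_span_eq_card (b.linearIndependent.comp _ (Fin.castLE_injective hd))]
  exact Fintype.card_fin d

section graphsAndLines

variable {F L : Type*} [Field F] [Field L] [Algebra F L] (A : Submodule F L)

def mulGraph (γ : L) : Submodule F (A × L) :=
  (LinearMap.mulLeft F γ ∘ₗ A.subtype).graph

variable {A} in
theorem mem_mulGraph {γ : L} {x : A × L} : x ∈ mulGraph A γ ↔ x.2 = γ * x.1 :=
  LinearMap.mem_graph_iff _ _

theorem finrank_mulGraph (γ : L) : finrank F (mulGraph A γ) = finrank F A := by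
  rw [mulGraph, LinearMap.graph_eq_range_prod]
  exact LinearMap.finrank_range_of_inj fun x y h => congrArg Prod.fst h

theorem fst_eq_zero_of_mem_span_zero_prod {x : L} {v : A × L} (hv : v ∈ F ∙ ((0 : A), x)) : v.1 = 0 := by
  obtain ⟨c, rfl⟩ := Submodule.mem_span_singleton.mp hv
  simp

open scoped Classical in
noncomputable def graphsAndLines [Fintype L] : Finset (Submodule F (A × L)) :=
  Finset.univ.image (mulGraph A) ∪
    (Finset.univ.erase 0).image fun x => F ∙ ((0 : A), x)

variable [Fintype L]

variable {A} in
theorem mem_graphsAndLines {W : Submodule F (A × L)} :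
    W ∈ graphsAndLines A ↔ (∃ γ, mulGraph A γ = W) ∨ ∃ x ≠ 0, F ∙ ((0 : A), x) = W := by
  simp [graphsAndLines]

theorem isSubspacePartition_graphsAndLines (hA : A ≠ ⊥) :
    IsSubspacePartition (graphsAndLines A) := by
  refine ⟨fun W hW => ?_, fun ⟨y, u⟩ hv => ?_⟩
  · rcases mem_graphsAndLines.mp hW with ⟨γ, rfl⟩ | ⟨x, hx, rfl⟩
    · obtain ⟨y, hyA, hy⟩ := Submodule.exists_mem_ne_zero_of_ne_bot hA
      refine (Submodule.ne_bot_iff _).mpr ⟨(⟨y, hyA⟩, γ * y), mem_mulGraph.mpr rfl, ?_⟩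
      exact ne_of_apply_ne (fun v : A × L => (v.1 : L)) (by simpa using hy)
    · simpa [Submodule.span_singleton_eq_bot] using hx
  by_cases hy : y = 0
  · subst hy
    have hu : u ≠ 0 := by simpa using hv
    refine ⟨F ∙ ((0 : A), u), ⟨mem_graphsAndLines.mpr (Or.inr ⟨u, hu, rfl⟩),
      Submodule.mem_span_singleton_self _⟩, fun W ⟨hW, hvW⟩ => ?_⟩
    rcases mem_graphsAndLines.mp hW with ⟨γ, rfl⟩ | ⟨x, hx, rfl⟩
    · exact absurd (by simpa using mem_mulGraph.mp hvW) hu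
    · obtain ⟨c, hc⟩ := Submodule.mem_span_singleton.mp hvW
      have hc0 : c ≠ 0 := by rintro rfl; exact hv (by simpa using hc.symm)
      rw [← hc, Submodule.span_singleton_smul_eq (isUnit_iff_ne_zero.mpr hc0)]
  · have hy' : (y : L) ≠ 0 := by simpa using hy
    refine ⟨mulGraph A (u * (y : L)⁻¹), ⟨mem_graphsAndLines.mpr (Or.inl ⟨_, rfl⟩),
      mem_mulGraph.mpr (by simp [hy'])⟩, fun W ⟨hW, hvW⟩ => ?_⟩
    rcases mem_graphsAndLines.mp hW with ⟨γ, rfl⟩ | ⟨x, -, rfl⟩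
    · have hu : u = γ * y := mem_mulGraph.mp hvW
      rw [hu, mul_inv_cancel_right₀ hy']
    · exact absurd (fst_eq_zero_of_mem_span_zero_prod A hvW) hy

theorem mulGraph_mem_graphsAndLines (γ : L) : mulGraph A γ ∈ graphsAndLines A :=
  mem_graphsAndLines.mpr (Or.inl ⟨γ, rfl⟩)

theorem finrank_le_of_mem_graphsAndLines (hA : A ≠ ⊥) {W : Submodule F (A × L)}
    (hW : W ∈ graphsAndLines A) : finrank F W ≤ finrank F A := by
  rcases mem_graphsAndLines.mp hW with ⟨γ, rfl⟩ | ⟨x, hx, rfl⟩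
  · exact (finrank_mulGraph A γ).le
  · have : Module.Finite F A := Module.Finite.of_finite
    rw [finrank_span_singleton (by simpa using hx), Nat.one_le_iff_ne_zero, Ne,
      Submodule.finrank_eq_zero]
    exact hA

theorem card_graphsAndLines_lt : (graphsAndLines A).card < 2 * Fintype.card L := by
  classical
  have hpos := Fintype.card_pos (α := L)
  calc (graphsAndLines A).card
      ≤ (Finset.univ : Finset L).card + (Finset.univ.erase (0 : L)).card :=
        (Finset.card_union_le _ _).trans (add_le_add Finset.card_image_le Finset.card_image_le)
    _ < 2 * Fintype.card L := by
        rw [Finset.card_erase_of_mem (Finset.mem_univ _), Finset.card_univ]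
        omega

end graphsAndLines

theorem exists_mem_partitionSizes_lt (F : Type*) [Field F] [Fintype F] {n d : ℕ} (hd : 0 < d)
    (hdn : 2 * d ≤ n) : ∃ m ∈ partitionSizes F n d, m < 2 * Fintype.card F ^ (n - d) := by
  obtain ⟨L, _, _, _, hL, hcard⟩ : ∃ (L : Type) (_ : Field L) (_ : Algebra F L) (_ : Fintype L),
      finrank F L = n - d ∧ Fintype.card L = Fintype.card F ^ (n - d) := by
    have : Fact (ringChar F).Prime := ⟨CharP.char_is_prime F _⟩
    have : NeZero (n - d) := ⟨by omega⟩
    refine ⟨FiniteField.Extension F (ringChar F) (n - d), inferInstance, inferInstance,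
      Fintype.ofFinite _, FiniteField.finrank_extension F _ _, ?_⟩
    simp only [Fintype.card_eq_nat_card, FiniteField.natCard_extension]
  have : Module.Finite F L := .of_finite
  obtain ⟨A, hA⟩ := Submodule.exists_finrank_eq (F := F) (V := L) (d := d) (by omega)
  have hA0 : A ≠ ⊥ := by
    rintro rfl
    rw [finrank_bot] at hA
    omega
  exact ⟨_, card_mem_partitionSizes (V := A × L) (by rw [finrank_prod, hA, hL]; omega)
    (isSubspacePartition_graphsAndLines A hA0)
    (fun W hW => hA ▸ finrank_le_of_mem_graphsAndLines A hA0 hW)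
    ⟨_, mulGraph_mem_graphsAndLines A 0, (finrank_mulGraph A 0).trans hA⟩,
    hcard ▸ card_graphsAndLines_lt A⟩

theorem sigma_antimonotone_general {F : Type*} [Field F] [Fintype F]
    (n d d' : ℕ)
    (hdd' : d' < d) (hd : 2 * d ≤ n)
    (a b : ℕ) (ha : IsLeast (partitionSizes F n d) a)
    (hb : IsLeast (partitionSizes F n d') b) :
    a < b := by
  obtain ⟨m, hm, hm_lt⟩ := exists_mem_partitionSizes_lt F (by omega : 0 < d) hd
  have hq : 2 ≤ Fintype.card F := Fintype.one_lt_card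
  calc a ≤ m := ha.2 hm
    _ < 2 * Fintype.card F ^ (n - d) := hm_lt
    _ ≤ Fintype.card F ^ (n - d + 1) := by rw [pow_succ']; gcongr
    _ ≤ Fintype.card F ^ (n - d') := Nat.pow_le_pow_right (by omega) (by omega)
    _ < b := pow_sub_lt_of_mem_partitionSizes hb.1 (by omega)

/-- σ_q(n,d) < σ_q(n,d') for 0 < d' < d ≤ n/2. -/
theorem sigma_antimonotone {F : Type*} [Field F] [Fintype F]
    (q n d d' : ℕ) (hq : Fintype.card F = q)
    (hd' : 0 < d') (hdd' : d' < d) (hd : 2 * d ≤ n)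
    (a b : ℕ) (ha : IsLeast (partitionSizes F n d) a)
    (hb : IsLeast (partitionSizes F n d') b) :
    a < b :=
  sigma_antimonotone_general n d d' hdd' hd a b ha hb
end

section
/- Let n = kt + r with k ≥ 2, 1 ≤ r < t, ℓ = q^r·Σ_{i=0}^{k-2} q^{it}, and let Π be a subspace partition of V(n,q) with m_t members of dimension t, every member of dimension ≤ t, such that every hyperplane of V contains at most ℓ members of Π of dimension t. Then m_t ≤ ℓ·q^t, i.e., m_t·θ_{n-t} ≤ ℓ·θ_n implies m_t < ℓ·q^t + 1, where θ_i = (q^i-1)/(q-1). -/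
open Module

/-- ℓ = q^r · Σ_{i=0}^{k-2} q^{it}. -/
def ell (q k t r : ℕ) : ℕ := q ^ r * ∑ i ∈ Finset.range (k - 1), q ^ (i * t)

/-!
Double count the pairs `(W, H)` of a `t`-dimensional member `W` and a hyperplane `H ⊇ W`:
each `W` lies in `θ_{n-t}` hyperplanes and each of the `θ_n` hyperplanes contains at most `ℓ`
members, so `m_t θ_{n-t} ≤ ℓ θ_n`. Since `θ_n = q^t θ_{n-t} + θ_t` and
`ℓ θ_t = q^r θ_{(k-1)t} < θ_r + q^r θ_{(k-1)t} = θ_{n-t}`, this forces `m_t ≤ ℓ q^t`.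
Hyperplanes are counted as kernels of the points of `ℙ(V*)`; those containing `W` are the
points of `ℙ(W⁰)`.
-/

open Finset
open scoped LinearAlgebra.Projectivization

-- `θ_m = (q^m - 1)/(q - 1)`, written as a geometric sum to avoid natural division.
def theta (q m : ℕ) : ℕ := ∑ i ∈ range m, q ^ i

lemma theta_add (q a b : ℕ) : theta q (a + b) = theta q a + q ^ a * theta q b := by
  simp only [theta, sum_range_add, pow_add, mul_sum]

lemma theta_pos (q : ℕ) {m : ℕ} (hm : 0 < m) : 0 < theta q m :=
  sum_pos' (fun _ _ => Nat.zero_le _) ⟨0, mem_range.mpr hm, by simp⟩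

lemma sum_pow_mul_theta (q t a : ℕ) :
    (∑ i ∈ range a, q ^ (i * t)) * theta q t = theta q (a * t) := by
  induction a with
  | zero => simp [theta]
  | succ a ih => rw [sum_range_succ, add_mul, ih, Nat.succ_mul, theta_add, pow_mul]

lemma ell_mul_theta_lt {q k t r : ℕ} (hk : 1 ≤ k) (hr : 1 ≤ r) :
    ell q k t r * theta q t < theta q (k * t + r - t) := by
  have hsplit : k * t + r - t = r + (k - 1) * t := by
    rw [Nat.sub_one_mul]; have := Nat.le_mul_of_pos_left t hk; omega
  rw [hsplit, theta_add, ell, mul_assoc, sum_pow_mul_theta]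
  exact Nat.lt_add_of_pos_left (theta_pos q hr)

theorem le_ell_mul_pow_of_mul_theta_le {q k t r m : ℕ} (hk : 1 ≤ k) (hr : 1 ≤ r)
    (h : m * theta q (k * t + r - t) ≤ theta q (k * t + r) * ell q k t r) :
    m ≤ ell q k t r * q ^ t := by
  set θ' := theta q (k * t + r - t)
  have hθ : theta q (k * t + r) = theta q t + q ^ t * θ' := by
    rw [← theta_add]; congr 1; have := Nat.le_mul_of_pos_left t hk; omega
  have hlt := ell_mul_theta_lt (q := q) (t := t) hk hr
  refine Nat.lt_succ_iff.mp (Nat.lt_of_mul_lt_mul_right (a := θ') ?_)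
  calc m * θ' ≤ ell q k t r * theta q t + ell q k t r * q ^ t * θ' := by
        rw [hθ] at h; linarith
    _ < (ell q k t r * q ^ t + 1) * θ' := by linarith

namespace Projectivization

variable {K V : Type*} [Field K] [AddCommGroup V] [Module K V]

lemma range_map_subtype (U : Submodule K V) :
    Set.range (map U.subtype U.injective_subtype) = {p : ℙ K V | p.rep ∈ U} := by
  ext p
  constructor
  · rintro ⟨u, rfl⟩
    induction u using ind with
    | h u hu =>
      obtain ⟨a, ha⟩ := exists_smul_eq_mk_rep K (U.subtype u) (by simpa using hu)
      rw [map_mk, Set.mem_ofPred_eq, ← ha]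
      exact U.smul_of_tower_mem a u.2
  · intro hp
    refine ⟨mk K ⟨p.rep, hp⟩ (by simpa using p.rep_nonzero), ?_⟩
    rw [map_mk]
    exact mk_rep p

lemma card_setOf_rep_mem [Finite K] (U : Submodule K V) :
    Nat.card {p : ℙ K V | p.rep ∈ U} = theta (Nat.card K) (finrank K U) := by
  rw [← range_map_subtype, Nat.card_range_of_injective (map_injective _ _),
    card_of_finrank K U rfl, theta]

lemma card_setOf_le_ker_rep [Finite K] [FiniteDimensional K V] (W : Submodule K V) :
    Nat.card {p : ℙ K (Dual K V) | W ≤ LinearMap.ker p.rep} =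
      theta (Nat.card K) (finrank K V - finrank K W) := by
  have hW := Subspace.finrank_add_finrank_dualAnnihilator_eq W
  have hmem (f : Dual K V) : W ≤ LinearMap.ker f ↔ f ∈ W.dualAnnihilator := by
    rw [Submodule.mem_dualAnnihilator]; exact ⟨fun h w hw => h hw, fun h w hw => h w hw⟩
  simp only [hmem]
  rw [card_setOf_rep_mem]
  congr 1
  omega

end Projectivization

open scoped Classical in
theorem card_mul_theta_le_of_forall_hyperplane {K V : Type*} [Field K] [Finite K]
    [AddCommGroup V] [Module K V] [FiniteDimensional K V] {t ℓ : ℕ}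
    (T : Finset (Submodule K V)) (hT : ∀ W ∈ T, finrank K W = t)
    (hH : ∀ H : Submodule K V, finrank K H = finrank K V - 1 → #{W ∈ T | W ≤ H} ≤ ℓ) :
    #T * theta (Nat.card K) (finrank K V - t) ≤
      theta (Nat.card K) (finrank K V) * ℓ := by
  have : Finite (Dual K V) := Module.finite_of_finite K
  have : Fintype (ℙ K (Dual K V)) := Fintype.ofFinite _
  have hcard : #(univ : Finset (ℙ K (Dual K V))) = theta (Nat.card K) (finrank K V) := by
    rw [card_univ, ← Nat.card_eq_fintype_card,
      Projectivization.card_of_finrank K _ (Subspace.dual_finrank_eq (K := K)), theta]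
  rw [← hcard]
  refine card_mul_le_card_mul (fun W p => W ≤ LinearMap.ker p.rep) (fun W hW => ?_)
    (fun p _ => ?_)
  · rw [← hT W hW, ← Projectivization.card_setOf_le_ker_rep, Nat.card_eq_card_toFinset]
    exact card_le_card fun p => by simp [bipartiteAbove]
  · have hp := p.rep.finrank_ker_add_one_of_ne_zero p.rep_nonzero
    exact hH _ (by omega)

open scoped Classical in
theorem mt_upper_bound_general {F : Type*} [Field F] [Fintype F]
    (q n k t r : ℕ) (hq : Fintype.card F = q)
    (hk : 2 ≤ k) (hr1 : 1 ≤ r) (hn : n = k * t + r)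
    (P : Finset (Submodule F (Fin n → F)))
    (hhyp : ∀ H : Submodule F (Fin n → F), finrank F ↥H = n - 1 →
      (P.filter (fun (W : Submodule F (Fin n → F)) =>
        finrank F ↥W = t ∧ W ≤ H)).card ≤ ell q k t r) :
    (P.filter (fun (W : Submodule F (Fin n → F)) => finrank F ↥W = t)).card
      ≤ ell q k t r * q ^ t := by
  have hcount := card_mul_theta_le_of_forall_hyperplane (ℓ := ell q k t r)
    (P.filter fun W => finrank F W = t) (fun W hW => (mem_filter.mp hW).2)
    (fun H hH => by rw [filter_filter]; exact hhyp H (by simpa using hH))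
  rw [Module.finrank_fin_fun, Nat.card_eq_fintype_card, hq] at hcount
  subst hn
  exact le_ell_mul_pow_of_mul_theta_le (by omega) hr1 hcount

open scoped Classical in
theorem mt_upper_bound {F : Type*} [Field F] [Fintype F]
    (q n k t r : ℕ) (hq : Fintype.card F = q)
    (hk : 2 ≤ k) (hr1 : 1 ≤ r) (hr2 : r < t) (hn : n = k * t + r)
    (P : Finset (Submodule F (Fin n → F))) (hP : IsSubspacePartition P)
    (hmax : ∀ W ∈ P, finrank F ↥W ≤ t)
    (hhyp : ∀ H : Submodule F (Fin n → F), finrank F ↥H = n - 1 →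
      (P.filter (fun (W : Submodule F (Fin n → F)) =>
        finrank F ↥W = t ∧ W ≤ H)).card ≤ ell q k t r) :
    (P.filter (fun (W : Submodule F (Fin n → F)) => finrank F ↥W = t)).card
      ≤ ell q k t r * q ^ t :=
  mt_upper_bound_general q n k t r hq hk hr1 hn P hhyp
end
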